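/- arXiv:2410.16457 — 2 statements merged into one kernel-verified Lean document; each statement's English description precedes it below -/
import Mathlib

section
/- Let μ and ν be probability measures on ℝ and let 0 < a < b. Then |∫_{(a,b]} log x dμ(x) − ∫_{(a,b]} log x dν(x)| ≤ 2(|log a| + |log b|) · sup_{x ∈ [a,b]} |μ((a,x]) − ν((a,x])|. -/
open MeasureTheory Set

lemma logKey_aux (μ : Measure ℝ) [IsProbabilityMeasure μ] (a b : ℝ)
    (ha : 0 < a) (hab : a < b) :
    (∫ x in Ioc a b, Real.log x ∂μ)
      = Real.log b * (μ (Ioc a b)).toReal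
        - ∫ t in Ioc a b, t⁻¹ * (μ (Ioc a t)).toReal := by
  have hb : 0 < b := ha.trans hab
  set f : ℝ → ℝ → ℝ := fun x t => (Ici x).indicator (fun s => s⁻¹) t with hf_def
  have hfeq : ∀ x t, f x t = if x ≤ t then t⁻¹ else 0 := by
    intro x t; simp [hf_def, Set.indicator_apply]
  -- measurability of the uncurried function
  have hmf : Measurable (Function.uncurry f) := by
    have : Function.uncurry f =
        {p : ℝ × ℝ | p.1 ≤ p.2}.indicator (fun p => p.2⁻¹) := by
      funext p
      simp [Function.uncurry, hfeq, Set.indicator_apply]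
    rw [this]
    exact (measurable_snd.inv).indicator (measurableSet_le measurable_fst measurable_snd)
  have hvol : IsFiniteMeasure (volume.restrict (Ioc a b)) :=
    ⟨by rw [Measure.restrict_apply_univ]; simp [Real.volume_Ioc]⟩
  -- integrability on the product
  have hInt : Integrable (Function.uncurry f)
      ((μ.restrict (Ioc a b)).prod (volume.restrict (Ioc a b))) := by
    have hae : ∀ᵐ p : ℝ × ℝ ∂((μ.restrict (Ioc a b)).prod (volume.restrict (Ioc a b))),
        p.2 ∈ Ioc a b := by
      rw [MeasureTheory.ae_iff]
      have : {p : ℝ × ℝ | ¬ p.2 ∈ Ioc a b} = (univ : Set ℝ) ×ˢ (Ioc a b)ᶜ := by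
        ext p; simp
      rw [this, Measure.prod_prod]
      simp [Measure.restrict_apply (measurableSet_Ioc.compl)]
    refine Integrable.mono' (integrable_const a⁻¹) hmf.aestronglyMeasurable ?_
    filter_upwards [hae] with p hp
    rw [Function.uncurry, hfeq]
    split_ifs with h
    · rw [Real.norm_eq_abs, abs_of_nonneg (inv_nonneg.2 (ha.trans hp.1).le)]
      exact inv_anti₀ ha hp.1.le
    · simp [inv_nonneg.2 ha.le]
  -- inner integral in t
  have inner1 : ∀ x ∈ Ioc a b,
      (∫ t in Ioc a b, f x t) = Real.log b - Real.log x := by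
    intro x hx
    have hx0 : 0 < x := ha.trans hx.1
    rw [hf_def]
    rw [MeasureTheory.setIntegral_indicator measurableSet_Ici]
    have : Ioc a b ∩ Ici x = Icc x b := by
      ext t
      constructor
      · rintro ⟨⟨_, ht2⟩, ht3⟩; exact ⟨ht3, ht2⟩
      · rintro ⟨h1, h2⟩; exact ⟨⟨lt_of_lt_of_le hx.1 h1, h2⟩, h1⟩
    rw [this, MeasureTheory.integral_Icc_eq_integral_Ioc,
      ← intervalIntegral.integral_of_le hx.2]
    rw [integral_inv_of_pos hx0 hb, Real.log_div hb.ne' hx0.ne']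
  -- inner integral in x
  have inner2 : ∀ t ∈ Ioc a b,
      (∫ x in Ioc a b, f x t ∂μ) = t⁻¹ * (μ (Ioc a t)).toReal := by
    intro t ht
    have : (fun x => f x t) = (Iic t).indicator (fun _ => t⁻¹) := by
      funext x; simp [hfeq, Set.indicator_apply]
    rw [this, MeasureTheory.setIntegral_indicator measurableSet_Iic]
    have h2 : Ioc a b ∩ Iic t = Ioc a t := by
      ext x
      constructor
      · rintro ⟨⟨h1, _⟩, h3⟩; exact ⟨h1, h3⟩
      · rintro ⟨h1, h2'⟩; exact ⟨⟨h1, h2'.trans ht.2⟩, h2'⟩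
    rw [h2, MeasureTheory.setIntegral_const, smul_eq_mul, mul_comm]
    rfl
  -- main computation
  have hswap : (∫ x in Ioc a b, ∫ t in Ioc a b, f x t ∂volume ∂μ)
      = ∫ t in Ioc a b, ∫ x in Ioc a b, f x t ∂μ ∂volume :=
    MeasureTheory.integral_integral_swap hInt
  have step1 : (∫ x in Ioc a b, Real.log x ∂μ)
      = ∫ x in Ioc a b, (Real.log b - ∫ t in Ioc a b, f x t) ∂μ := by
    refine MeasureTheory.setIntegral_congr_fun measurableSet_Ioc ?_
    intro x hx
    show Real.log x = Real.log b - ∫ t in Ioc a b, f x t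
    rw [inner1 x hx]
    ring
  have hIntInner : Integrable (fun x => ∫ t in Ioc a b, f x t)
      (μ.restrict (Ioc a b)) := hInt.integral_prod_left
  rw [step1, MeasureTheory.integral_sub (integrable_const _) hIntInner,
    MeasureTheory.setIntegral_const, smul_eq_mul, mul_comm, hswap]
  congr 1
  refine MeasureTheory.setIntegral_congr_fun measurableSet_Ioc ?_
  intro t ht
  exact inner2 t ht

/-- Comparison of log-integrals of two probability measures on an
interval `(a,b]` in terms of the Kolmogorov-type distance on `[a,b]`. -/
theorem log_integral_comparison
    (μ ν : Measure ℝ) [IsProbabilityMeasure μ] [IsProbabilityMeasure ν]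
    (a b : ℝ) (ha : 0 < a) (hab : a < b) :
    |(∫ x in Set.Ioc a b, Real.log x ∂μ) - ∫ x in Set.Ioc a b, Real.log x ∂ν| ≤
      2 * (|Real.log a| + |Real.log b|) *
        sSup {d : ℝ | ∃ x ∈ Set.Icc a b,
          d = |(μ (Set.Ioc a x)).toReal - (ν (Set.Ioc a x)).toReal|} := by
  have hb : 0 < b := ha.trans hab
  set F : ℝ → ℝ := fun t => (μ (Ioc a t)).toReal with hF
  set G : ℝ → ℝ := fun t => (ν (Ioc a t)).toReal with hG
  set S : Set ℝ := {d : ℝ | ∃ x ∈ Set.Icc a b,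
      d = |(μ (Set.Ioc a x)).toReal - (ν (Set.Ioc a x)).toReal|} with hS
  set K : ℝ := sSup S with hK
  have hS_ne : S.Nonempty := by
    exact ⟨_, b, ⟨hab.le, le_refl b⟩, rfl⟩
  have hS_bdd : BddAbove S := by
    refine ⟨2, ?_⟩
    rintro d ⟨x, _, rfl⟩
    have h1 : (μ (Set.Ioc a x)).toReal ≤ 1 := by
      have := prob_le_one (μ := μ) (s := Set.Ioc a x)
      exact ENNReal.toReal_le_of_le_ofReal one_pos.le (by simpa using this)
    have h2 : (ν (Set.Ioc a x)).toReal ≤ 1 := by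
      have := prob_le_one (μ := ν) (s := Set.Ioc a x)
      exact ENNReal.toReal_le_of_le_ofReal one_pos.le (by simpa using this)
    have h3 : (0:ℝ) ≤ (μ (Set.Ioc a x)).toReal := ENNReal.toReal_nonneg
    have h4 : (0:ℝ) ≤ (ν (Set.Ioc a x)).toReal := ENNReal.toReal_nonneg
    rw [abs_sub_le_iff]
    constructor <;> linarith
  have hmem : ∀ x ∈ Set.Icc a b, |F x - G x| ≤ K := by
    intro x hx
    exact le_csSup hS_bdd ⟨x, hx, rfl⟩
  have hK0 : 0 ≤ K :=
    le_trans (abs_nonneg _) (hmem b ⟨hab.le, le_refl b⟩)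
  -- integrability of the inner functions
  have hFmono : Monotone F := by
    intro s t hst
    exact ENNReal.toReal_mono (measure_ne_top μ _)
      (measure_mono (Set.Ioc_subset_Ioc_right hst))
  have hGmono : Monotone G := by
    intro s t hst
    exact ENNReal.toReal_mono (measure_ne_top ν _)
      (measure_mono (Set.Ioc_subset_Ioc_right hst))
  have hintF : Integrable (fun t => t⁻¹ * F t) (volume.restrict (Ioc a b)) := by
    refine Integrable.mono' (integrable_const a⁻¹)
      ((measurable_inv.mul hFmono.measurable).aestronglyMeasurable) ?_
    filter_upwards [ae_restrict_mem measurableSet_Ioc] with t ht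
    have ht0 : 0 < t := ha.trans ht.1
    rw [Real.norm_eq_abs, abs_mul, abs_of_nonneg (inv_nonneg.2 ht0.le),
      abs_of_nonneg ENNReal.toReal_nonneg]
    have h1 : (μ (Set.Ioc a t)).toReal ≤ 1 :=
      ENNReal.toReal_le_of_le_ofReal one_pos.le (by simpa using prob_le_one (μ := μ))
    calc t⁻¹ * F t ≤ t⁻¹ * 1 := by
          exact mul_le_mul_of_nonneg_left h1 (inv_nonneg.2 ht0.le)
      _ ≤ a⁻¹ := by rw [mul_one]; exact inv_anti₀ ha ht.1.le
  have hintG : Integrable (fun t => t⁻¹ * G t) (volume.restrict (Ioc a b)) := by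
    refine Integrable.mono' (integrable_const a⁻¹)
      ((measurable_inv.mul hGmono.measurable).aestronglyMeasurable) ?_
    filter_upwards [ae_restrict_mem measurableSet_Ioc] with t ht
    have ht0 : 0 < t := ha.trans ht.1
    rw [Real.norm_eq_abs, abs_mul, abs_of_nonneg (inv_nonneg.2 ht0.le),
      abs_of_nonneg ENNReal.toReal_nonneg]
    have h1 : (ν (Set.Ioc a t)).toReal ≤ 1 :=
      ENNReal.toReal_le_of_le_ofReal one_pos.le (by simpa using prob_le_one (μ := ν))
    calc t⁻¹ * G t ≤ t⁻¹ * 1 := by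
          exact mul_le_mul_of_nonneg_left h1 (inv_nonneg.2 ht0.le)
      _ ≤ a⁻¹ := by rw [mul_one]; exact inv_anti₀ ha ht.1.le
  -- the key identity
  have key : (∫ x in Set.Ioc a b, Real.log x ∂μ) - ∫ x in Set.Ioc a b, Real.log x ∂ν
      = Real.log b * (F b - G b)
        - ∫ t in Ioc a b, t⁻¹ * (F t - G t) := by
    have hsub : (∫ t in Ioc a b, t⁻¹ * (F t - G t))
        = (∫ t in Ioc a b, t⁻¹ * F t) - ∫ t in Ioc a b, t⁻¹ * G t := by
      rw [← MeasureTheory.integral_sub hintF hintG]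
      exact integral_congr_ae (Filter.Eventually.of_forall fun t => by ring)
    rw [logKey_aux μ a b ha hab, logKey_aux ν a b ha hab, hsub]
    ring
  rw [key]
  -- integrability for the bound
  have hintFG : Integrable (fun t => t⁻¹ * (F t - G t)) (volume.restrict (Ioc a b)) := by
    have := hintF.sub hintG
    refine this.congr (Filter.Eventually.of_forall fun t => ?_)
    simp only [Pi.sub_apply]
    ring
  have hint_inv : IntegrableOn (fun t : ℝ => t⁻¹) (Ioc a b) volume := by
    refine (intervalIntegrable_iff_integrableOn_Ioc_of_le hab.le).mp ?_
    exact intervalIntegral.intervalIntegrable_inv (fun x hx => by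
      rcases Set.mem_uIcc.mp hx with h | h
      · exact (lt_of_lt_of_le ha h.1).ne'
      · exact (lt_of_lt_of_le hb h.1).ne') (by fun_prop)
  have hbound : |∫ t in Ioc a b, t⁻¹ * (F t - G t)| ≤ (Real.log b - Real.log a) * K := by
    have h1 : |∫ t in Ioc a b, t⁻¹ * (F t - G t)|
        ≤ ∫ t in Ioc a b, |t⁻¹ * (F t - G t)| := by
      simpa only [Real.norm_eq_abs] using
        norm_integral_le_integral_norm (μ := volume.restrict (Ioc a b))
          (fun t => t⁻¹ * (F t - G t))
    have h2 : (∫ t in Ioc a b, |t⁻¹ * (F t - G t)|)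
        ≤ ∫ t in Ioc a b, t⁻¹ * K := by
      refine MeasureTheory.setIntegral_mono_on hintFG.abs (hint_inv.mul_const K)
        measurableSet_Ioc ?_
      intro t ht
      have ht0 : 0 < t := ha.trans ht.1
      rw [abs_mul, abs_of_nonneg (inv_nonneg.2 ht0.le)]
      exact mul_le_mul_of_nonneg_left (hmem t ⟨ht.1.le, ht.2⟩) (inv_nonneg.2 ht0.le)
    have h3 : (∫ t in Ioc a b, t⁻¹ * K) = (Real.log b - Real.log a) * K := by
      rw [MeasureTheory.integral_mul_const]
      congr 1
      rw [← intervalIntegral.integral_of_le hab.le, integral_inv_of_pos ha hb,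
        Real.log_div hb.ne' ha.ne']
    linarith
  have hFb : |F b - G b| ≤ K := hmem b ⟨hab.le, le_refl b⟩
  calc |Real.log b * (F b - G b) - ∫ t in Ioc a b, t⁻¹ * (F t - G t)|
      ≤ |Real.log b * (F b - G b)| + |∫ t in Ioc a b, t⁻¹ * (F t - G t)| :=
        abs_sub _ _
    _ ≤ |Real.log b| * K + (Real.log b - Real.log a) * K := by
        rw [abs_mul]
        exact add_le_add (mul_le_mul_of_nonneg_left hFb (abs_nonneg _)) hbound
    _ ≤ 2 * (|Real.log a| + |Real.log b|) * K := by
        have h1 : Real.log b - Real.log a ≤ |Real.log b| + |Real.log a| := by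
          have h2 := le_abs_self (Real.log b)
          have h3 := neg_abs_le (Real.log a)
          linarith
        nlinarith [abs_nonneg (Real.log a), abs_nonneg (Real.log b)]
end

section
/- Let n, m ≥ 1, let X_1,…,X_m be n×n complex matrices, and let L be their linearization. Then for every z ∈ ℂ, det(z·I_{nm} − L) = det(z^m·I_n − X_1 X_2 ⋯ X_m). In particular, z is an eigenvalue of L if and only if z^m is an eigenvalue of X_1 X_2 ⋯ X_m. -/
open Matrix Polynomial

/-- Linearization of `m` square matrices of size `n`: the `(nm)×(nm)` block matrix whose
only nonzero blocks are `X_{k+1}` at block position `(k, k+1)` for `k = 1,…,m-1` and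
`X_1` at block position `(m, 1)` (cyclic superdiagonal). -/
noncomputable def linearization {n m : ℕ} {R : Type*} [Semiring R]
    (X : Fin m → Matrix (Fin n) (Fin n) R) :
    Matrix (Fin m × Fin n) (Fin m × Fin n) R :=
  fun p q => if ((p.1 : ℕ) + 1) % m = (q.1 : ℕ) then X q.1 p.2 q.2 else 0

namespace LinAux

lemma charpoly_eval {I : Type*} [Fintype I] [DecidableEq I] (M : Matrix I I ℂ) (r : ℂ) :
    M.charpoly.eval r = (r • (1 : Matrix I I ℂ) - M).det := by
  rw [Matrix.charpoly, ← Polynomial.coe_evalRingHom, RingHom.map_det]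
  congr 1
  ext i j
  by_cases h : i = j <;>
    simp [Matrix.charmatrix_apply, h, Matrix.one_apply, Matrix.smul_apply, Matrix.sub_apply,
      Matrix.diagonal_apply]

variable {n m : ℕ}

noncomputable def Y (hm : 1 ≤ m) (X : Fin m → Matrix (Fin n) (Fin n) ℂ) (j : ℕ) :
    Matrix (Fin n) (Fin n) ℂ :=
  X ⟨j % m, Nat.mod_lt _ hm⟩

noncomputable def seg (hm : 1 ≤ m) (X : Fin m → Matrix (Fin n) (Fin n) ℂ) (k l : ℕ) :
    Matrix (Fin n) (Fin n) ℂ :=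
  ((List.range' k l).map (Y hm X)).prod

lemma seg_zero (hm : 1 ≤ m) (X : Fin m → Matrix (Fin n) (Fin n) ℂ) (k : ℕ) :
    seg hm X k 0 = 1 := by simp [seg]

lemma seg_succ (hm : 1 ≤ m) (X : Fin m → Matrix (Fin n) (Fin n) ℂ) (k l : ℕ) :
    seg hm X k (l + 1) = Y hm X k * seg hm X (k + 1) l := by
  simp [seg, List.range'_succ]

lemma seg_full (hm : 1 ≤ m) (X : Fin m → Matrix (Fin n) (Fin n) ℂ) :
    seg hm X 0 m = ((List.finRange m).map X).prod := by
  unfold seg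
  congr 1
  rw [← List.range_eq_range', ← List.map_coe_finRange_eq_range, List.map_map]
  apply List.map_congr_left
  intro i _
  simp only [Function.comp_apply, Y]
  simp [Fin.ext_iff, Nat.mod_eq_of_lt i.isLt]

lemma det_block (hn : 1 ≤ n) (a : Fin m) (B : Matrix (Fin n) (Fin n) ℂ)
    (W : Matrix {p : Fin m × Fin n // p.1 = a} {p : Fin m × Fin n // p.1 = a} ℂ)
    (hW : ∀ p r, W p r = B p.1.2 r.1.2) : W.det = B.det := by
  let e : {p : Fin m × Fin n // p.1 = a} ≃ Fin n :=
    { toFun := fun p => p.1.2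
      invFun := fun j => ⟨(a, j), rfl⟩
      left_inv := fun ⟨⟨x, y⟩, h⟩ => by subst h; rfl
      right_inv := fun j => rfl }
  have : Matrix.reindex e e W = B := by
    ext i j
    simp [Matrix.reindex_apply, Matrix.submatrix_apply, hW, e]
  rw [← this, Matrix.det_reindex_self]


lemma main_det (hn : 1 ≤ n) (hm : 1 ≤ m) (X : Fin m → Matrix (Fin n) (Fin n) ℂ)
    (z : ℂ) (hz : z ≠ 0) :
    (z • (1 : Matrix (Fin m × Fin n) (Fin m × Fin n) ℂ) - linearization X).det =
      (z ^ m • (1 : Matrix (Fin n) (Fin n) ℂ) - ((List.finRange m).map X).prod).det := by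
  set P : Matrix (Fin n) (Fin n) ℂ := ((List.finRange m).map X).prod with hP
  set L : Matrix (Fin m × Fin n) (Fin m × Fin n) ℂ := linearization X with hL
  set V : Matrix (Fin m × Fin n) (Fin m × Fin n) ℂ :=
    fun p r => if (p.1 : ℕ) ≤ (r.1 : ℕ) then
      z ^ (m - 1 + (p.1 : ℕ) - (r.1 : ℕ)) *
        seg hm X ((p.1 : ℕ) + 1) ((r.1 : ℕ) - (p.1 : ℕ)) p.2 r.2
    else 0 with hV
  set D : Fin m → Matrix (Fin n) (Fin n) ℂ :=
    fun a => if (a : ℕ) = m - 1 then z ^ m • 1 - P else z ^ m • 1 with hD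
  -- V is block upper triangular
  have hVtri : V.BlockTriangular (fun p => p.1) := by
    intro p r h
    have h' : (r.1 : ℕ) < (p.1 : ℕ) := h
    exact if_neg (by omega)
  -- determinant of V
  have hVdet : V.det = ((z ^ (m - 1)) ^ n) ^ m := by
    rw [hVtri.det_fintype]
    have hb : ∀ a : Fin m, ((V.toSquareBlock (fun p => p.1) a).det) = (z ^ (m - 1)) ^ n := by
      intro a
      rw [det_block hn a ((z ^ (m - 1)) • (1 : Matrix (Fin n) (Fin n) ℂ)) _ ?_]
      · rw [Matrix.det_smul, Matrix.det_one, Fintype.card_fin, mul_one]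
      · intro p r
        have hW : (V.toSquareBlock (fun p => p.1) a) p r = V p.1 r.1 := rfl
        have hp : ((p.1.1 : Fin m) : ℕ) = (a : ℕ) := congrArg Fin.val p.2
        have hr : ((r.1.1 : Fin m) : ℕ) = (a : ℕ) := congrArg Fin.val r.2
        rw [hW]
        simp only [hV]
        rw [hp, hr, if_pos le_rfl, Nat.sub_self, Nat.add_sub_cancel, seg_zero]
        simp [Matrix.smul_apply]
    simp [hb]
  set T : Matrix (Fin m × Fin n) (Fin m × Fin n) ℂ :=
    (z • (1 : Matrix (Fin m × Fin n) (Fin m × Fin n) ℂ) - L) * V with hT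
  -- entries of T
  have hTen : ∀ p r : Fin m × Fin n, T p r = z * V p r -
      ∑ k : Fin n, Y hm X ((p.1 : ℕ) + 1) p.2 k *
        V (⟨((p.1 : ℕ) + 1) % m, Nat.mod_lt _ hm⟩, k) r := by
    intro p r
    rw [hT, Matrix.sub_mul, Matrix.smul_mul, Matrix.one_mul, Matrix.sub_apply,
      Matrix.smul_apply, smul_eq_mul, Matrix.mul_apply, Fintype.sum_prod_type]
    congr 1
    rw [Finset.sum_eq_single (⟨((p.1 : ℕ) + 1) % m, Nat.mod_lt _ hm⟩ : Fin m)]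
    · apply Finset.sum_congr rfl
      intro k _
      congr 1
      show L p (⟨((p.1 : ℕ) + 1) % m, Nat.mod_lt _ hm⟩, k) = _
      rw [hL]
      show (if ((p.1 : ℕ) + 1) % m = ((p.1 : ℕ) + 1) % m then _ else 0) = _
      rw [if_pos rfl]
      rfl
    · intro q _ hq
      apply Finset.sum_eq_zero
      intro k _
      have hLz : L p (q, k) = 0 := by
        rw [hL]
        show (if ((p.1 : ℕ) + 1) % m = (q : ℕ) then _ else 0) = 0
        rw [if_neg]
        intro hc
        exact hq (Fin.ext hc.symm)
      rw [hLz, zero_mul]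
    · intro h; exact absurd (Finset.mem_univ _) h
  -- strictly lower block entries of T vanish
  have hTlow : ∀ p r : Fin m × Fin n, (p.1 : ℕ) < (r.1 : ℕ) → T p r = 0 := by
    intro p r h
    have hrm : (r.1 : ℕ) < m := r.1.isLt
    have hpm : ((p.1 : ℕ) + 1) % m = (p.1 : ℕ) + 1 := Nat.mod_eq_of_lt (by omega)
    set e := m - 1 + (p.1 : ℕ) - (r.1 : ℕ) with he
    set l := (r.1 : ℕ) - (p.1 : ℕ) - 1 with hl
    rw [hTen p r]
    have c1 : V p r = z ^ e * seg hm X ((p.1 : ℕ) + 1) (l + 1) p.2 r.2 := by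
      simp only [hV]
      rw [if_pos (le_of_lt h)]
      congr 2
      omega
    have c2 : ∀ k : Fin n, V (⟨((p.1 : ℕ) + 1) % m, Nat.mod_lt _ hm⟩, k) r =
        z ^ (e + 1) * seg hm X ((p.1 : ℕ) + 1 + 1) l k r.2 := by
      intro k
      show (if ((p.1 : ℕ) + 1) % m ≤ (r.1 : ℕ) then
        z ^ (m - 1 + (((p.1 : ℕ) + 1) % m) - (r.1 : ℕ)) *
          seg hm X (((p.1 : ℕ) + 1) % m + 1) ((r.1 : ℕ) - ((p.1 : ℕ) + 1) % m) k r.2 else 0) = _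
      rw [hpm, if_pos (by omega)]
      congr 2 <;> omega
    rw [c1, seg_succ]
    simp only [c2]
    rw [Matrix.mul_apply, Finset.mul_sum, Finset.mul_sum]
    apply sub_eq_zero_of_eq
    apply Finset.sum_congr rfl
    intro k _
    ring
  -- diagonal blocks of T
  have hTdiag : ∀ p r : Fin m × Fin n, p.1 = r.1 → T p r = D p.1 p.2 r.2 := by
    intro p r hpr
    have hpm' : (p.1 : ℕ) < m := p.1.isLt
    have hrp : (r.1 : ℕ) = (p.1 : ℕ) := congrArg Fin.val hpr.symm
    have hmm : m - 1 + 1 = m := by omega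
    rw [hTen p r]
    have c1 : V p r = z ^ (m - 1) * (1 : Matrix (Fin n) (Fin n) ℂ) p.2 r.2 := by
      simp only [hV]
      rw [hrp, if_pos le_rfl, Nat.sub_self, Nat.add_sub_cancel, seg_zero]
    by_cases hlast : (p.1 : ℕ) = m - 1
    · have hm1 : (p.1 : ℕ) + 1 = m := by omega
      have hpm : ((p.1 : ℕ) + 1) % m = 0 := by rw [hm1, Nat.mod_self]
      have c2 : ∀ k : Fin n, V (⟨((p.1 : ℕ) + 1) % m, Nat.mod_lt _ hm⟩, k) r =
          seg hm X 1 (m - 1) k r.2 := by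
        intro k
        show (if ((p.1 : ℕ) + 1) % m ≤ (r.1 : ℕ) then
          z ^ (m - 1 + (((p.1 : ℕ) + 1) % m) - (r.1 : ℕ)) *
            seg hm X (((p.1 : ℕ) + 1) % m + 1) ((r.1 : ℕ) - ((p.1 : ℕ) + 1) % m) k r.2
          else 0) = _
        rw [hpm, if_pos (Nat.zero_le _)]
        have h1 : m - 1 + 0 - (r.1 : ℕ) = 0 := by omega
        have h2 : (r.1 : ℕ) - 0 = m - 1 := by omega
        rw [h1, h2, pow_zero, one_mul]
      have hY : Y hm X ((p.1 : ℕ) + 1) = Y hm X 0 := by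
        unfold Y
        simp [hpm]
      have hseg : Y hm X 0 * seg hm X 1 (m - 1) = P := by
        rw [hP, ← seg_full hm X, ← seg_succ hm X 0 (m - 1), hmm]
      have hDp : D p.1 = z ^ m • 1 - P := by
        simp only [hD]
        rw [if_pos hlast]
      rw [c1, hDp]
      simp only [c2, hY]
      rw [Matrix.sub_apply, Matrix.smul_apply, smul_eq_mul, ← hseg, Matrix.mul_apply,
        ← mul_assoc, ← pow_succ', hmm]
    · have hpm : ((p.1 : ℕ) + 1) % m = (p.1 : ℕ) + 1 := Nat.mod_eq_of_lt (by omega)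
      have c2 : ∀ k : Fin n, V (⟨((p.1 : ℕ) + 1) % m, Nat.mod_lt _ hm⟩, k) r = 0 := by
        intro k
        show (if ((p.1 : ℕ) + 1) % m ≤ (r.1 : ℕ) then
          z ^ (m - 1 + (((p.1 : ℕ) + 1) % m) - (r.1 : ℕ)) *
            seg hm X (((p.1 : ℕ) + 1) % m + 1) ((r.1 : ℕ) - ((p.1 : ℕ) + 1) % m) k r.2
          else 0) = 0
        rw [if_neg]
        rw [hpm]
        omega
      have hDp : D p.1 = z ^ m • 1 := by
        simp only [hD]
        rw [if_neg hlast]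
      simp only [c2, mul_zero, Finset.sum_const_zero, sub_zero]
      rw [c1, hDp, Matrix.smul_apply, smul_eq_mul, ← mul_assoc, ← pow_succ', hmm]
  -- T is block lower triangular, so its transpose is block upper triangular
  have hTtri : Tᵀ.BlockTriangular (fun p => p.1) := by
    intro p r h
    exact hTlow r p h
  have hTdet : T.det = ((z ^ m) ^ n) ^ (m - 1) * (z ^ m • 1 - P).det := by
    rw [← Matrix.det_transpose T, hTtri.det_fintype]
    have hb : ∀ a : Fin m, ((Tᵀ.toSquareBlock (fun p => p.1) a).det) = (D a).det := by
      intro a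
      rw [det_block hn a ((D a)ᵀ) _ ?_, Matrix.det_transpose]
      intro p r
      have h1 : (Tᵀ.toSquareBlock (fun p => p.1) a) p r = T r.1 p.1 := rfl
      rw [h1, hTdiag r.1 p.1 (r.2.trans p.2.symm), Matrix.transpose_apply, r.2]
    rw [Finset.prod_congr rfl (fun a _ => hb a)]
    have hDlast : D ⟨m - 1, by omega⟩ = z ^ m • 1 - P := by
      simp [hD]
    have hDother : ∀ a : Fin m, (a : ℕ) ≠ m - 1 → (D a).det = (z ^ m) ^ n := by
      intro a ha
      simp only [hD]
      rw [if_neg ha, Matrix.det_smul, Matrix.det_one, Fintype.card_fin, mul_one]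
    rw [← Finset.mul_prod_erase Finset.univ _ (Finset.mem_univ (⟨m - 1, by omega⟩ : Fin m))]
    rw [hDlast]
    rw [Finset.prod_congr rfl (fun a ha => hDother a (fun hc =>
      Finset.ne_of_mem_erase ha (by apply Fin.ext; exact hc)))]
    rw [Finset.prod_const, Finset.card_erase_of_mem (Finset.mem_univ _), Finset.card_univ,
      Fintype.card_fin]
    ring
  have hdetmul : (z • (1 : Matrix (Fin m × Fin n) (Fin m × Fin n) ℂ) - L).det * V.det = T.det :=
    (Matrix.det_mul _ _).symm
  rw [hVdet, hTdet] at hdetmul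
  have e1 : ((z ^ (m - 1)) ^ n) ^ m = z ^ ((m - 1) * n * m) := by
    rw [← pow_mul, ← pow_mul]
    congr 1
    ring
  have e2 : ((z ^ m) ^ n) ^ (m - 1) = z ^ ((m - 1) * n * m) := by
    rw [← pow_mul, ← pow_mul]
    congr 1
    ring
  rw [e1, e2] at hdetmul
  have hzp : z ^ ((m - 1) * n * m) ≠ 0 := pow_ne_zero _ hz
  exact mul_right_cancel₀ hzp (by rw [hdetmul]; ring)

end LinAux

/-- `det(zI - L) = det(z^m·I - X_1⋯X_m)` for the linearization `L` of
`X_1,…,X_m`; in particular `z` is an eigenvalue of `L` iff `z^m` is an eigenvalue of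
`X_1⋯X_m`. -/
theorem linearization_det_charpoly
    (n m : ℕ) (hn : 1 ≤ n) (hm : 1 ≤ m)
    (X : Fin m → Matrix (Fin n) (Fin n) ℂ) (z : ℂ) :
    (z • (1 : Matrix (Fin m × Fin n) (Fin m × Fin n) ℂ) - linearization X).det =
      (z ^ m • (1 : Matrix (Fin n) (Fin n) ℂ) - ((List.finRange m).map X).prod).det ∧
    ((linearization X).charpoly.IsRoot z ↔
      (((List.finRange m).map X).prod).charpoly.IsRoot (z ^ m)) := by
  have hpoly : (linearization X).charpoly =
      (((List.finRange m).map X).prod).charpoly.comp ((Polynomial.X : ℂ[X]) ^ m) := by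
    have hsub : {w : ℂ | w ≠ 0} ⊆ {x | ((linearization X).charpoly -
        (((List.finRange m).map X).prod).charpoly.comp ((Polynomial.X : ℂ[X]) ^ m)).IsRoot x} := by
      intro w hw
      simp only [Set.mem_setOf_eq, Polynomial.IsRoot, Polynomial.eval_sub,
        Polynomial.eval_comp, Polynomial.eval_pow, Polynomial.eval_X]
      rw [LinAux.charpoly_eval, LinAux.charpoly_eval, LinAux.main_det hn hm X w hw, sub_self]
    have hinf : ({w : ℂ | w ≠ 0}).Infinite := by
      have h0 : ({(0 : ℂ)} : Set ℂ).Finite := Set.finite_singleton 0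
      exact h0.infinite_compl
    have h0 := Polynomial.eq_zero_of_infinite_isRoot _ (hinf.mono hsub)
    exact sub_eq_zero.mp h0
  constructor
  · rw [← LinAux.charpoly_eval, ← LinAux.charpoly_eval, hpoly, Polynomial.eval_comp,
      Polynomial.eval_pow, Polynomial.eval_X]
  · rw [hpoly]
    simp [Polynomial.IsRoot, Polynomial.eval_comp]
end
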